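/- arXiv:2512.23190 — 2 statements merged into one kernel-verified Lean document; each statement's English description precedes it below -/
import Mathlib

section
/- Let d ≥ 1, λ > 0, L ≥ 0, and let v_1, …, v_n ∈ ℝ^d satisfy ‖v_i‖ ≤ L for every i ∈ {1,…,n}. Define A_i = λI + Σ_{j=1}^{i} v_j v_jᵀ for i = 0, 1, …, n. Then Σ_{i=1}^{n} v_iᵀ A_i^{-2} v_i ≤ trace(A_0^{-1}) − trace(A_n^{-1}) ≤ d/λ. -/
open scoped RealInnerProductSpace

noncomputable def mApp {d : ℕ} (A : Matrix (Fin d) (Fin d) ℝ) (x : EuclideanSpace ℝ (Fin d)) :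
    EuclideanSpace ℝ (Fin d) :=
  Matrix.toEuclideanLin A x

noncomputable def quadForm {d : ℕ} (A : Matrix (Fin d) (Fin d) ℝ) (x : EuclideanSpace ℝ (Fin d)) : ℝ :=
  ⟪x, mApp A x⟫

noncomputable def mnorm {d : ℕ} (A : Matrix (Fin d) (Fin d) ℝ) (x : EuclideanSpace ℝ (Fin d)) : ℝ :=
  Real.sqrt (quadForm A x)

/-- `p` is a Mahalanobis projection of `y` onto `C` with respect to `A`. -/
def IsMProj {d : ℕ} (A : Matrix (Fin d) (Fin d) ℝ) (C : Set (EuclideanSpace ℝ (Fin d)))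
    (y p : EuclideanSpace ℝ (Fin d)) : Prop :=
  p ∈ C ∧ ∀ z ∈ C, mnorm A (p - y) ≤ mnorm A (z - y)

/-- The outer product `v vᵀ` of a vector with itself. -/
noncomputable def outerProd {d : ℕ} (v : EuclideanSpace ℝ (Fin d)) : Matrix (Fin d) (Fin d) ℝ :=
  Matrix.of (fun i j => v i * v j)

section aux

open Matrix

lemma outerProd_mulVec {d : ℕ} (v : EuclideanSpace ℝ (Fin d)) (x : Fin d → ℝ) :
    outerProd v *ᵥ x = (v ⬝ᵥ x) • (fun i => v i : Fin d → ℝ) := by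
  funext i
  simp [outerProd, mulVec, dotProduct, Finset.mul_sum, mul_comm, mul_assoc, mul_left_comm]

lemma posSemidef_outerProd {d : ℕ} (v : EuclideanSpace ℝ (Fin d)) :
    (outerProd v).PosSemidef := by
  refine Matrix.PosSemidef.of_dotProduct_mulVec_nonneg ?_ ?_
  · ext i j
    simp [outerProd, conjTranspose_apply, mul_comm]
  · intro x
    rw [outerProd_mulVec]
    simp only [star_trivial, dotProduct_smul, smul_eq_mul]
    have h1 : x ⬝ᵥ (fun i => v i) = v ⬝ᵥ x := dotProduct_comm x _
    rw [h1]
    exact mul_self_nonneg _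
 
lemma trace_mul_outerProd {d : ℕ} (X : Matrix (Fin d) (Fin d) ℝ) (v : EuclideanSpace ℝ (Fin d)) :
    (X * outerProd v).trace = v ⬝ᵥ X *ᵥ v := by
  simp only [Matrix.trace, Matrix.diag, Matrix.mul_apply, outerProd, Matrix.of_apply,
    dotProduct, mulVec, Finset.mul_sum]
  exact Finset.sum_congr rfl fun i _ => Finset.sum_congr rfl fun j _ => by ring

lemma trace_nonneg_of_posSemidef {d : ℕ} {M : Matrix (Fin d) (Fin d) ℝ}
    (hM : M.PosSemidef) : 0 ≤ M.trace := by
  apply Finset.sum_nonneg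
  intro i _
  have := hM.dotProduct_mulVec_nonneg (Pi.single i 1)
  simpa [Matrix.mulVec_single, dotProduct_single] using this

/-- per-step inequality -/
lemma step_ineq {d : ℕ} (B : Matrix (Fin d) (Fin d) ℝ) (v : EuclideanSpace ℝ (Fin d))
    (hB : B.PosDef) :
    v ⬝ᵥ ((B + outerProd v)⁻¹ * (B + outerProd v)⁻¹) *ᵥ v
      ≤ (B⁻¹).trace - ((B + outerProd v)⁻¹).trace := by
  set C := B + outerProd v with hCdef
  have hC : C.PosDef := hB.add_posSemidef (posSemidef_outerProd v)
  have hBdet : IsUnit B.det := hB.det_pos.ne'.isUnit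
  have hCdet : IsUnit C.det := hC.det_pos.ne'.isUnit
  have hBB : B⁻¹ * B = 1 := Matrix.nonsing_inv_mul B hBdet
  have hCC : C * C⁻¹ = 1 := Matrix.mul_nonsing_inv C hCdet
  -- key identity
  have hM : B⁻¹ - C⁻¹ = B⁻¹ * outerProd v * C⁻¹ := by
    have h1 : outerProd v = C - B := by rw [hCdef, add_sub_cancel_left]
    rw [h1, Matrix.mul_sub, Matrix.sub_mul, Matrix.mul_assoc, hCC, hBB, Matrix.mul_one,
      Matrix.one_mul]
  set q : ℝ := v ⬝ᵥ B⁻¹ *ᵥ v with hqdef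
  set r : ℝ := v ⬝ᵥ C⁻¹ *ᵥ v with hrdef
  set s : ℝ := v ⬝ᵥ (C⁻¹ * B⁻¹) *ᵥ v with hsdef
  set t : ℝ := v ⬝ᵥ (C⁻¹ * C⁻¹) *ᵥ v with htdef
  have hq : 0 ≤ q := by simpa using hB.inv.posSemidef.dotProduct_mulVec_nonneg v.ofLp
  have hr : 0 ≤ r := by simpa using hC.inv.posSemidef.dotProduct_mulVec_nonneg v.ofLp
  have ht : 0 ≤ t := by
    have h := Matrix.posSemidef_conjTranspose_mul_self (C⁻¹)
    rw [hC.inv.isHermitian.eq] at h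
    simpa using h.dotProduct_mulVec_nonneg v.ofLp
  -- scalar identity 1 : q - r = r * q
  have key1 : q - r = r * q := by
    have h := congrArg (fun M => v ⬝ᵥ M *ᵥ v) hM
    simpa [Matrix.sub_mulVec, Matrix.mul_assoc, ← Matrix.mulVec_mulVec, outerProd_mulVec,
      Matrix.mulVec_smul, dotProduct_smul, smul_eq_mul, hqdef, hrdef,
      mul_comm] using h
  -- scalar identity 2 : s - t = r * s
  have key2 : s - t = r * s := by
    have hM2 : C⁻¹ * B⁻¹ - C⁻¹ * C⁻¹ = C⁻¹ * B⁻¹ * outerProd v * C⁻¹ := by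
      calc C⁻¹ * B⁻¹ - C⁻¹ * C⁻¹ = C⁻¹ * (B⁻¹ - C⁻¹) := by rw [Matrix.mul_sub]
      _ = C⁻¹ * (B⁻¹ * outerProd v * C⁻¹) := by rw [hM]
      _ = C⁻¹ * B⁻¹ * outerProd v * C⁻¹ := by simp only [Matrix.mul_assoc]
    have h := congrArg (fun M => v ⬝ᵥ M *ᵥ v) hM2
    simpa [Matrix.sub_mulVec, Matrix.mul_assoc, ← Matrix.mulVec_mulVec, outerProd_mulVec,
      Matrix.mulVec_smul, dotProduct_smul, smul_eq_mul, hsdef, htdef, hrdef,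
      mul_comm] using h
  -- trace difference equals s
  have htr : (B⁻¹).trace - (C⁻¹).trace = s := by
    rw [← Matrix.trace_sub, hM, Matrix.trace_mul_comm, ← Matrix.mul_assoc,
      trace_mul_outerProd]
  have h1r : 0 < 1 - r := by nlinarith
  have hs : 0 ≤ s := by nlinarith
  rw [htr]
  nlinarith [mul_nonneg hr hs]


lemma inner_mApp {d : ℕ} (M : Matrix (Fin d) (Fin d) ℝ) (x y : EuclideanSpace ℝ (Fin d)) :
    ⟪x, mApp M y⟫ = x ⬝ᵥ M *ᵥ y := by
  simp only [mApp, Matrix.toEuclideanLin_apply, PiLp.inner_apply, RCLike.inner_apply,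
    conj_trivial, dotProduct]
  exact Finset.sum_congr rfl fun _ _ => mul_comm _ _

/-- elliptical potential lemma, trace version. -/
theorem stmt_2 {d : ℕ} (hd : 1 ≤ d) (n : ℕ) (lam L : ℝ) (hlam : 0 < lam) (hL : 0 ≤ L)
    (v : ℕ → EuclideanSpace ℝ (Fin d)) (hv : ∀ i < n, ‖v i‖ ≤ L)
    (A : ℕ → Matrix (Fin d) (Fin d) ℝ)
    (hA : ∀ i, A i = lam • (1 : Matrix (Fin d) (Fin d) ℝ) +
      ∑ j ∈ Finset.range i, outerProd (v j)) :
    (∑ i ∈ Finset.range n, ⟪v i, mApp ((A (i+1))⁻¹ * (A (i+1))⁻¹) (v i)⟫)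
      ≤ Matrix.trace (A 0)⁻¹ - Matrix.trace (A n)⁻¹ ∧
    Matrix.trace (A 0)⁻¹ - Matrix.trace (A n)⁻¹ ≤ d / lam := by
  have hstep : ∀ i, A (i + 1) = A i + outerProd (v i) := by
    intro i
    rw [hA, hA, Finset.sum_range_succ, add_assoc]
  have hPD : ∀ i, (A i).PosDef := by
    intro i
    rw [hA]
    refine Matrix.PosDef.add_posSemidef ?_ ?_
    · rw [Matrix.smul_one_eq_diagonal]
      exact Matrix.posDef_diagonal_iff.mpr fun _ => hlam
    · exact Finset.sum_induction _ Matrix.PosSemidef (fun a b ha hb => ha.add hb)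
        Matrix.PosSemidef.zero (fun j _ => posSemidef_outerProd (v j))
  have h0 : Matrix.trace (A 0)⁻¹ = d / lam := by
    rw [hA 0]
    simp only [Finset.range_zero, Finset.sum_empty, add_zero]
    have hmul : (lam • (1 : Matrix (Fin d) (Fin d) ℝ)) * (lam⁻¹ • 1) = 1 := by
      simp [Matrix.smul_mul, Matrix.mul_smul, smul_smul, mul_inv_cancel₀ hlam.ne', inv_mul_cancel₀ hlam.ne']
    rw [Matrix.inv_eq_right_inv hmul, Matrix.trace_smul, Matrix.trace_one]
    simp [div_eq_mul_inv, mul_comm]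
  have htrn : 0 ≤ Matrix.trace (A n)⁻¹ :=
    trace_nonneg_of_posSemidef (hPD n).inv.posSemidef
  constructor
  · calc (∑ i ∈ Finset.range n, ⟪v i, mApp ((A (i+1))⁻¹ * (A (i+1))⁻¹) (v i)⟫)
        = ∑ i ∈ Finset.range n, v i ⬝ᵥ ((A (i+1))⁻¹ * (A (i+1))⁻¹) *ᵥ v i :=
        Finset.sum_congr rfl fun i _ => inner_mApp _ _ _
      _ ≤ ∑ i ∈ Finset.range n,
           (Matrix.trace (A i)⁻¹ - Matrix.trace (A (i+1))⁻¹) := by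
        refine Finset.sum_le_sum fun i _ => ?_
        have := step_ineq (A i) (v i) (hPD i)
        rwa [← hstep i] at this
      _ = Matrix.trace (A 0)⁻¹ - Matrix.trace (A n)⁻¹ :=
        Finset.sum_range_sub' (fun i => Matrix.trace (A i)⁻¹) n
  · rw [h0]; linarith

end aux
end

section
/- Let A ∈ ℝ^{d×d} be a positive-definite symmetric matrix, let R > 0, and let y ∈ ℝ^d with ‖y‖ > R. Then there exists a unique μ* > 0 such that ‖(A + μ*I)⁻¹Ay‖ = R, and the point x* = (A + μ*I)⁻¹Ay is the unique minimizer of x ↦ (x − y)ᵀA(x − y) over the ball B(R) = {x ∈ ℝ^d : ‖x‖ ≤ R}; that is, x* is the Mahalanobis projection of y onto B(R) with respect to A. -/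
open scoped RealInnerProductSpace

section AuxLemmas

variable {d : ℕ}

lemma mApp_coe (A : Matrix (Fin d) (Fin d) ℝ) (x : EuclideanSpace ℝ (Fin d)) (i : Fin d) :
    mApp A x i = Matrix.mulVec A x i := rfl

lemma mApp_add (A B : Matrix (Fin d) (Fin d) ℝ) (x : EuclideanSpace ℝ (Fin d)) :
    mApp (A + B) x = mApp A x + mApp B x := by
  simp [mApp, map_add]

lemma mApp_smul_one (μ : ℝ) (x : EuclideanSpace ℝ (Fin d)) :
    mApp (μ • (1 : Matrix (Fin d) (Fin d) ℝ)) x = μ • x := by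
  ext i
  rw [mApp_coe]
  simp [Matrix.smul_mulVec, Matrix.one_mulVec]

lemma mApp_mul (A B : Matrix (Fin d) (Fin d) ℝ) (x : EuclideanSpace ℝ (Fin d)) :
    mApp (A * B) x = mApp A (mApp B x) := by
  ext i
  rw [mApp_coe, mApp_coe, ← Matrix.mulVec_mulVec]
  rfl

lemma mApp_one (x : EuclideanSpace ℝ (Fin d)) : mApp (1 : Matrix (Fin d) (Fin d) ℝ) x = x := by
  ext i; rw [mApp_coe]; simp [Matrix.one_mulVec]

lemma smul_one_posDef {μ : ℝ} (hμ : 0 < μ) :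
    (μ • (1 : Matrix (Fin d) (Fin d) ℝ)).PosDef := by
  rw [Matrix.smul_one_eq_diagonal]
  exact Matrix.PosDef.diagonal (fun i => hμ)

lemma quadForm_pos' {A : Matrix (Fin d) (Fin d) ℝ} (hA : A.PosDef)
    {x : EuclideanSpace ℝ (Fin d)} (hx : x ≠ 0) : 0 < quadForm A x := by
  have h := hA.dotProduct_mulVec_pos (x := fun i => x i) (by
    intro h0
    apply hx
    ext i
    exact congrFun h0 i)
  simpa [quadForm, PiLp.inner_apply, dotProduct, mApp_coe, mul_comm] using h

lemma quadForm_nonneg {A : Matrix (Fin d) (Fin d) ℝ} (hA : A.PosDef)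
    (x : EuclideanSpace ℝ (Fin d)) : 0 ≤ quadForm A x := by
  rcases eq_or_ne x 0 with rfl | hx
  · simp [quadForm, mApp, map_zero]
  · exact (quadForm_pos' hA hx).le

lemma mApp_eigen {A : Matrix (Fin d) (Fin d) ℝ} (hA : A.IsHermitian) (i : Fin d) :
    mApp A (hA.eigenvectorBasis i) = hA.eigenvalues i • hA.eigenvectorBasis i := by
  ext j
  rw [mApp_coe]
  exact congrFun (hA.mulVec_eigenvectorBasis i) j

lemma mApp_symm {A : Matrix (Fin d) (Fin d) ℝ} (hA : A.IsHermitian)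
    (x z : EuclideanSpace ℝ (Fin d)) : ⟪mApp A x, z⟫ = ⟪x, mApp A z⟫ :=
  (Matrix.isHermitian_iff_isSymmetric.mp hA) x z

lemma inv_apply_eq {A : Matrix (Fin d) (Fin d) ℝ} (hA : A.PosDef) {μ : ℝ} (hμ : 0 < μ)
    (w v : EuclideanSpace ℝ (Fin d))
    (h : mApp (A + μ • (1 : Matrix (Fin d) (Fin d) ℝ)) w = v) :
    mApp (A + μ • (1 : Matrix (Fin d) (Fin d) ℝ))⁻¹ v = w := by
  set M := A + μ • (1 : Matrix (Fin d) (Fin d) ℝ) with hM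
  have hMpd : M.PosDef := hA.add (smul_one_posDef hμ)
  have hinv : M⁻¹ * M = 1 :=
    Matrix.nonsing_inv_mul M ((Matrix.isUnit_iff_isUnit_det M).mp hMpd.isUnit)
  rw [← h, ← mApp_mul, hinv, mApp_one]

end AuxLemmas

set_option maxHeartbeats 1000000 in
/-- characterization of the Mahalanobis projection onto a Euclidean ball:
there is a unique `μ* > 0` with `‖(A + μ*I)⁻¹Ay‖ = R`, and `x* = (A + μ*I)⁻¹Ay` is the unique
minimizer of `x ↦ (x−y)ᵀA(x−y)` over `B(R)`. -/
theorem stmt_12 {d : ℕ} (A : Matrix (Fin d) (Fin d) ℝ) (hA : A.PosDef)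
    (R : ℝ) (hR : 0 < R) (y : EuclideanSpace ℝ (Fin d)) (hy : R < ‖y‖) :
    ∃ μstar : ℝ, ∃ xstar : EuclideanSpace ℝ (Fin d),
      0 < μstar ∧
      xstar = mApp (A + μstar • (1 : Matrix (Fin d) (Fin d) ℝ))⁻¹ (mApp A y) ∧
      ‖xstar‖ = R ∧
      (∀ μ : ℝ, 0 < μ →
        ‖mApp (A + μ • (1 : Matrix (Fin d) (Fin d) ℝ))⁻¹ (mApp A y)‖ = R → μ = μstar) ∧
      xstar ∈ Metric.closedBall (0 : EuclideanSpace ℝ (Fin d)) R ∧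
      (∀ z ∈ Metric.closedBall (0 : EuclideanSpace ℝ (Fin d)) R,
        quadForm A (xstar - y) ≤ quadForm A (z - y)) ∧
      (∀ z ∈ Metric.closedBall (0 : EuclideanSpace ℝ (Fin d)) R,
        (∀ w ∈ Metric.closedBall (0 : EuclideanSpace ℝ (Fin d)) R,
          quadForm A (z - y) ≤ quadForm A (w - y)) → z = xstar) := by
  classical
  have hy0 : y ≠ 0 := by
    intro h; rw [h, norm_zero] at hy; linarith
  set b := hA.1.eigenvectorBasis with hbdef
  set ev := hA.1.eigenvalues with hevdef
  have hevpos : ∀ i, 0 < ev i := hA.eigenvalues_pos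
  set c : EuclideanSpace ℝ (Fin d) := b.repr y with hcdef
  have hysum : ∑ i, c i • b i = y := b.sum_repr y
  have hcne : ∃ i, c i ≠ 0 := by
    by_contra h
    push_neg at h
    apply hy0
    rw [← hysum]
    simp [h]
  obtain ⟨i0, hi0⟩ := hcne
  have hdenom : ∀ μ : ℝ, 0 ≤ μ → ∀ i, 0 < ev i + μ := by
    intro μ hμ i; linarith [hevpos i]
  -- the norm of a vector given by its coordinates in the eigenbasis
  have hnorm : ∀ v : EuclideanSpace ℝ (Fin d), ‖∑ i, v i • b i‖ ^ 2 = ∑ i, (v i) ^ 2 := by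
    intro v
    rw [b.sum_repr_symm v, LinearIsometryEquiv.norm_map, EuclideanSpace.norm_eq,
      Real.sq_sqrt (by positivity)]
    simp [sq_abs]
  -- eigen action of A + μ I
  have hMb : ∀ (μ : ℝ) (i : Fin d),
      mApp (A + μ • (1 : Matrix (Fin d) (Fin d) ℝ)) (b i) = (ev i + μ) • b i := by
    intro μ i
    rw [mApp_add, mApp_smul_one, mApp_eigen hA.1, add_smul]
  -- the candidate solutions
  set t : ℝ → EuclideanSpace ℝ (Fin d) := fun μ => WithLp.toLp 2 (fun i => ev i / (ev i + μ) * c i) with htdef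
  set w : ℝ → EuclideanSpace ℝ (Fin d) := fun μ => ∑ i, t μ i • b i with hwdef
  have hMw : ∀ μ : ℝ, 0 ≤ μ →
      mApp (A + μ • (1 : Matrix (Fin d) (Fin d) ℝ)) (w μ) = mApp A y := by
    intro μ hμ
    have h1 : mApp (A + μ • (1 : Matrix (Fin d) (Fin d) ℝ)) (w μ)
        = ∑ i, (ev i * c i) • b i := by
      rw [hwdef]
      simp only [mApp, map_sum, map_smul]
      refine Finset.sum_congr rfl (fun i _ => ?_)
      have : Matrix.toEuclideanLin (A + μ • (1 : Matrix (Fin d) (Fin d) ℝ)) (b i)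
          = (ev i + μ) • b i := hMb μ i
      rw [this, smul_smul]
      congr 1
      show ev i / (ev i + μ) * c i * (ev i + μ) = ev i * c i
      have hne : ev i + μ ≠ 0 := (hdenom μ hμ i).ne'
      field_simp
    have h2 : mApp A y = ∑ i, (ev i * c i) • b i := by
      conv_lhs => rw [← hysum]
      simp only [mApp, map_sum, map_smul]
      refine Finset.sum_congr rfl (fun i _ => ?_)
      have : Matrix.toEuclideanLin A (b i) = ev i • b i := mApp_eigen hA.1 i
      rw [this, smul_smul, mul_comm]
    rw [h1, h2]
  -- the squared-norm function
  set g : ℝ → ℝ := fun μ => ∑ i, (ev i / (ev i + μ) * c i) ^ 2 with hgdef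
  have hwg : ∀ μ : ℝ, ‖w μ‖ ^ 2 = g μ := fun μ => hnorm (t μ)
  have hinvw : ∀ μ : ℝ, 0 < μ →
      mApp (A + μ • (1 : Matrix (Fin d) (Fin d) ℝ))⁻¹ (mApp A y) = w μ := by
    intro μ hμ
    exact inv_apply_eq hA hμ _ _ (hMw μ hμ.le)
  -- g at 0
  have hg0 : g 0 = ‖y‖ ^ 2 := by
    have h1 : g 0 = ∑ i, (c i) ^ 2 := by
      refine Finset.sum_congr rfl (fun i _ => ?_)
      rw [add_zero, div_self (hevpos i).ne', one_mul]
    have h2 : ‖y‖ ^ 2 = ∑ i, (c i) ^ 2 := by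
      conv_lhs => rw [← hysum]
      exact hnorm c
    rw [h1, h2]
  -- continuity
  have hgc : ContinuousOn g (Set.Ici 0) := by
    refine continuousOn_finset_sum _ (fun i _ => ?_)
    refine ContinuousOn.pow ?_ 2
    refine ContinuousOn.mul ?_ continuousOn_const
    exact ContinuousOn.div continuousOn_const
      ((continuous_const.add continuous_id).continuousOn)
      (fun μ hμ => (hdenom μ hμ i).ne')
  -- strict antitonicity
  have hanti : StrictAntiOn g (Set.Ici 0) := by
    intro μ hμ ν hν hlt
    refine Finset.sum_lt_sum (fun i _ => ?_) ⟨i0, Finset.mem_univ i0, ?_⟩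
    · have h1 : (0:ℝ) ≤ ev i / (ev i + ν) :=
        div_nonneg (hevpos i).le (hdenom ν hν i).le
      have h2 : ev i / (ev i + ν) ≤ ev i / (ev i + μ) := by
        apply div_le_div_of_nonneg_left (hevpos i).le (hdenom μ hμ i)
        linarith
      rw [mul_pow, mul_pow]
      exact mul_le_mul_of_nonneg_right (pow_le_pow_left₀ h1 h2 2) (sq_nonneg _)
    · have h1 : (0:ℝ) ≤ ev i0 / (ev i0 + ν) :=
        div_nonneg (hevpos i0).le (hdenom ν hν i0).le
      have h2 : ev i0 / (ev i0 + ν) < ev i0 / (ev i0 + μ) := by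
        apply div_lt_div_of_pos_left (hevpos i0) (hdenom μ hμ i0)
        linarith
      have hc2 : (0:ℝ) < c i0 ^ 2 :=
        lt_of_le_of_ne (sq_nonneg _) (Ne.symm (pow_ne_zero 2 hi0))
      rw [mul_pow, mul_pow]
      exact mul_lt_mul_of_pos_right (pow_lt_pow_left₀ h2 h1 (by norm_num)) hc2
  -- g is small for large μ
  set S : ℝ := ∑ i, (ev i * c i) ^ 2 with hSdef
  have hS : 0 ≤ S := Finset.sum_nonneg (fun i _ => sq_nonneg _)
  set μ₀ : ℝ := (Real.sqrt S + R) / R with hμ₀def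
  have hμ₀pos : 0 < μ₀ := by
    apply div_pos _ hR
    have := Real.sqrt_nonneg S
    linarith
  have hgμ₀ : g μ₀ < R ^ 2 := by
    have hbound : g μ₀ ≤ S / μ₀ ^ 2 := by
      rw [hSdef, Finset.sum_div]
      refine Finset.sum_le_sum (fun i _ => ?_)
      have h1 : (ev i / (ev i + μ₀) * c i) ^ 2 = (ev i * c i) ^ 2 / (ev i + μ₀) ^ 2 := by
        rw [mul_pow, div_pow, div_mul_eq_mul_div, mul_pow]
      rw [h1]
      apply div_le_div_of_nonneg_left (sq_nonneg _) (pow_pos hμ₀pos 2)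
      nlinarith [hevpos i, hμ₀pos]
    have hfinal : S / μ₀ ^ 2 < R ^ 2 := by
      rw [div_lt_iff₀ (by positivity)]
      have hs2 : Real.sqrt S ^ 2 = S := Real.sq_sqrt hS
      have hsn : 0 ≤ Real.sqrt S := Real.sqrt_nonneg S
      have hμ₀R : μ₀ * R = Real.sqrt S + R := by
        rw [hμ₀def, div_mul_cancel₀ _ hR.ne']
      nlinarith [hμ₀R]
    linarith
  have hg0R : R ^ 2 < g 0 := by
    rw [hg0]
    exact pow_lt_pow_left₀ hy hR.le (by norm_num)
  -- intermediate value theorem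
  have hsub := intermediate_value_Ioo' hμ₀pos.le
    (hgc.mono (Set.Icc_subset_Ici_self))
  obtain ⟨μs, hμsmem, hμseq⟩ := hsub ⟨hgμ₀, hg0R⟩
  have hμs : 0 < μs := hμsmem.1
  -- the norm identity
  have hnormμ : ∀ μ : ℝ, 0 < μ →
      ‖mApp (A + μ • (1 : Matrix (Fin d) (Fin d) ℝ))⁻¹ (mApp A y)‖ ^ 2 = g μ := by
    intro μ hμ
    rw [hinvw μ hμ, hwg]
  have hxnorm : ‖w μs‖ = R := by
    have h : ‖w μs‖ ^ 2 = R ^ 2 := by rw [hwg, hμseq]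
    have h' := congrArg Real.sqrt h
    rwa [Real.sqrt_sq (norm_nonneg _), Real.sqrt_sq hR.le] at h'
  have hball : w μs ∈ Metric.closedBall (0 : EuclideanSpace ℝ (Fin d)) R :=
    Metric.mem_closedBall.mpr (by rw [dist_zero_right, hxnorm])
  have hkey : mApp A (w μs - y) = (-μs) • (w μs) := by
    have h1 : mApp A (w μs) + μs • (w μs) = mApp A y := by
      have h := hMw μs hμs.le
      rwa [mApp_add, mApp_smul_one] at h
    have h2 : mApp A (w μs - y) = mApp A (w μs) - mApp A y := by
      simp [mApp, map_sub]
    rw [h2, ← h1]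
    module
  have hexp : ∀ u v : EuclideanSpace ℝ (Fin d),
      quadForm A (u + v) = quadForm A u + 2 * ⟪u, mApp A v⟫ + quadForm A v := by
    intro u v
    have hAadd : mApp A (u + v) = mApp A u + mApp A v := by simp [mApp, map_add]
    rw [quadForm, hAadd, inner_add_left, inner_add_right, inner_add_right]
    have h3 : ⟪v, mApp A u⟫ = ⟪u, mApp A v⟫ := by
      rw [← mApp_symm hA.1 u v, real_inner_comm]
    rw [h3]
    simp only [quadForm]
    ring
  have hcross : ∀ z ∈ Metric.closedBall (0 : EuclideanSpace ℝ (Fin d)) R,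
      0 ≤ ⟪z - w μs, mApp A (w μs - y)⟫ := by
    intro z hz
    rw [Metric.mem_closedBall, dist_zero_right] at hz
    have h1 : ⟪z - w μs, w μs⟫ = ⟪z, w μs⟫ - ⟪w μs, w μs⟫ := inner_sub_left _ _ _
    have h2 : ⟪z, w μs⟫ ≤ ‖z‖ * ‖w μs‖ := real_inner_le_norm z (w μs)
    have h3 : ⟪w μs, w μs⟫ = R ^ 2 := by
      rw [real_inner_self_eq_norm_sq, hxnorm]
    have h4 : ⟪z - w μs, w μs⟫ ≤ 0 := by
      rw [h1, h3]
      have h5 : ‖z‖ * ‖w μs‖ ≤ R * R := by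
        rw [hxnorm]
        exact mul_le_mul_of_nonneg_right hz hR.le
      have h6 : R ^ 2 = R * R := by ring
      linarith
    rw [hkey, inner_smul_right, neg_mul_comm]
    exact mul_nonneg hμs.le (neg_nonneg.mpr h4)
  have hdecomp : ∀ z : EuclideanSpace ℝ (Fin d),
      quadForm A (z - y) = quadForm A (z - w μs)
        + 2 * ⟪z - w μs, mApp A (w μs - y)⟫ + quadForm A (w μs - y) := by
    intro z
    have h : z - y = (z - w μs) + (w μs - y) := by abel
    rw [h, hexp]
  refine ⟨μs, w μs, hμs, (hinvw μs hμs).symm, hxnorm, ?_, hball, ?_, ?_⟩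
  · -- uniqueness of μ
    intro μ hμ hnrm
    have hgμ : g μ = R ^ 2 := by
      rw [← hnormμ μ hμ, hnrm]
    exact hanti.injOn (Set.mem_Ici.mpr hμ.le) (Set.mem_Ici.mpr hμs.le)
      (by rw [hgμ, hμseq])
  · -- minimality
    intro z hz
    have h1 := hcross z hz
    have h2 := quadForm_nonneg hA (z - w μs)
    rw [hdecomp z]
    linarith
  · -- uniqueness of the minimizer
    intro z hz hmin
    have h1 := hmin (w μs) hball
    have h2 := hcross z hz
    have h3 := hdecomp z
    have h4 : quadForm A (z - w μs) ≤ 0 := by linarith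
    have h5 : z - w μs = 0 := by
      by_contra hne
      exact absurd h4 (not_le.mpr (quadForm_pos' hA hne))
    exact sub_eq_zero.mp h5
end
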